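/- Let covers : Fin n → Fin n → Prop satisfy covers i j → i < j (with respect to the natural order on Fin n). Then the minimum number of chains (sequences in which consecutive elements are related by covers) needed to partition Fin n equals n minus the maximum size of a matching in the bipartite graph with parts Fin n (as drop-offs) and Fin n (as pickups) and edges {(i,j) : covers i j}. -/

import Mathlib

/-- A partition of `Fin n` into chains: a list of lists, each of which is a
chain under `covers`, whose concatenation is a permutation of all of `Fin n`. -/
def IsChainPartition (n : ℕ) (covers : Fin n → Fin n → Prop)
    (L : List (List (Fin n))) : Prop :=
  (∀ l ∈ L, l.Chain' covers) ∧ L.flatten.Perm (List.finRange n)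

/-- A matching in the bipartite graph with parts `Fin n` (drop-offs) and
`Fin n` (pickups) and edges `{(i, j) : covers i j}`. -/
def IsMatching (n : ℕ) (covers : Fin n → Fin n → Prop)
    (M : Finset (Fin n × Fin n)) : Prop :=
  (∀ e ∈ M, covers e.1 e.2) ∧
  (∀ e ∈ M, ∀ e' ∈ M, e.1 = e'.1 → e = e') ∧
  (∀ e ∈ M, ∀ e' ∈ M, e.2 = e'.2 → e = e')

/-!
A chain partition with `t` chains of an `n`-element set has `n - t` consecutive pairs; every
element starts at most one pair and ends at most one pair, so these pairs form a matching.
Conversely, start from the `n` singleton chains and add the edges of a matching one at a time: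
the tail of a new edge `(i, j)` is not yet followed by anything, so it ends its chain, and `j`
likewise starts its chain. These are different chains because chains increase and `i < j`, so
concatenating them uses up the edge and lowers the number of chains by one.
-/

namespace List

variable {α : Type*} {R : α → α → Prop}

theorem consecutivePairs_cons_cons (a b : α) (l : List α) :
    (a :: b :: l).consecutivePairs = (a, b) :: (b :: l).consecutivePairs :=
  rfl

theorem map_fst_consecutivePairs : ∀ l : List α, l.consecutivePairs.map Prod.fst = l.dropLast
  | [] | [_] => rfl
  | a :: b :: l => by
    rw [consecutivePairs_cons_cons, map_cons, map_fst_consecutivePairs, dropLast_cons_cons]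

theorem map_snd_consecutivePairs (l : List α) : l.consecutivePairs.map Prod.snd = l.tail :=
  map_snd_zip (tail_sublist l).length_le

theorem IsChain.rel_of_mem_consecutivePairs :
    ∀ {l : List α}, l.IsChain R → ∀ {p : α × α}, p ∈ l.consecutivePairs → R p.1 p.2
  | [], _, _, hp | [_], _, _, hp => by simp [consecutivePairs] at hp
  | a :: b :: l, h, p, hp => by
    rw [isChain_cons_cons] at h
    rw [consecutivePairs_cons_cons, mem_cons] at hp
    rcases hp with rfl | hp
    · exact h.1
    · exact h.2.rel_of_mem_consecutivePairs hp

theorem IsChain.exists_eq_concat :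
    ∀ {l : List α}, l.IsChain R → ∀ {a : α}, a ∈ l → (∀ b, ¬R a b) → ∃ p, l = p ++ [a]
  | [_], _, _, ha, _ => ⟨[], by rw [mem_singleton.1 ha, nil_append]⟩
  | x :: y :: l, h, a, ha, hR => by
    rw [isChain_cons_cons] at h
    rcases mem_cons.1 ha with rfl | ha
    · exact absurd h.1 (hR y)
    · obtain ⟨p, hp⟩ := h.2.exists_eq_concat ha hR
      exact ⟨x :: p, by rw [hp, cons_append]⟩

theorem IsChain.exists_eq_cons :
    ∀ {l : List α}, l.IsChain R → ∀ {a : α}, a ∈ l → (∀ b, ¬R b a) → ∃ s, l = a :: s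
  | x :: l, h, a, ha, hR => by
    rcases mem_cons.1 ha with rfl | ha
    · exact ⟨l, rfl⟩
    · obtain ⟨s, rfl⟩ := h.tail.exists_eq_cons ha hR
      exact absurd (isChain_cons_cons.1 h).1 (hR x)

theorem length_flatten_le_length_flatMap_tail_add (L : List (List α)) :
    L.flatten.length ≤ (L.flatMap tail).length + L.length := by
  induction L with
  | nil => simp
  | cons l L ih =>
    simp only [flatten_cons, flatMap_cons, length_append, length_tail, length_cons]
    omega

theorem flatMap_sublist_flatten {f : List α → List α} (hf : ∀ l, f l <+ l) (L : List (List α)) :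
    L.flatMap f <+ L.flatten :=
  flatMap_id (L := L) ▸ Sublist.flatMap_right L fun l _ => hf l

end List

open List

variable {α : Type*}

theorem exists_matching_of_chains {R : α → α → Prop} (L : List (List α))
    (hL : ∀ c ∈ L, c.IsChain R) (hnd : L.flatten.Nodup) :
    ∃ M : Finset (α × α), (∀ e ∈ M, R e.1 e.2) ∧ Set.InjOn Prod.fst (M : Set (α × α)) ∧
      Set.InjOn Prod.snd (M : Set (α × α)) ∧ L.flatten.length ≤ M.card + L.length := by
  classical
  set P := L.flatMap consecutivePairs
  have hfst : (P.map Prod.fst).Nodup := by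
    rw [map_flatMap]
    simp only [map_fst_consecutivePairs]
    exact hnd.sublist (flatMap_sublist_flatten dropLast_sublist L)
  have hsnd_eq : P.map Prod.snd = L.flatMap tail := by
    rw [map_flatMap]
    simp only [map_snd_consecutivePairs]
  have hsnd : (P.map Prod.snd).Nodup :=
    hsnd_eq ▸ hnd.sublist (flatMap_sublist_flatten tail_sublist L)
  refine ⟨P.toFinset, ?_, ?_, ?_, ?_⟩
  · intro e he
    obtain ⟨c, hc, he⟩ := mem_flatMap.1 (mem_toFinset.1 he)
    exact (hL c hc).rel_of_mem_consecutivePairs he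
  · rw [coe_toFinset]
    exact fun x hx y hy => inj_on_of_nodup_map hfst hx hy
  · rw [coe_toFinset]
    exact fun x hx y hy => inj_on_of_nodup_map hsnd hx hy
  · rw [toFinset_card_of_nodup hsnd.of_map, ← length_map (f := Prod.snd), hsnd_eq]
    exact length_flatten_le_length_flatMap_tail_add L

theorem exists_join_chains [Preorder α] {R S : α → α → Prop} (hR : ∀ ⦃a b⦄, R a b → a < b)
    (hRS : ∀ ⦃a b⦄, R a b → S a b) {i j : α} (hij : i < j) (hSij : S i j)
    (hi : ∀ b, ¬R i b) (hj : ∀ b, ¬R b j) {L : List (List α)} (hL : ∀ c ∈ L, c.IsChain R)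
    (hiL : i ∈ L.flatten) (hjL : j ∈ L.flatten) :
    ∃ L' : List (List α), L'.length + 1 = L.length ∧ (∀ c ∈ L', c.IsChain S) ∧
      L'.flatten.Perm L.flatten := by
  classical
  obtain ⟨c₁, hc₁, hic₁⟩ := exists_of_mem_flatten hiL
  obtain ⟨c₂, hc₂, hjc₂⟩ := exists_of_mem_flatten hjL
  obtain ⟨p, rfl⟩ := (hL c₁ hc₁).exists_eq_concat hic₁ hi
  obtain ⟨s, rfl⟩ := (hL c₂ hc₂).exists_eq_cons hjc₂ hj
  have hne : p ++ [i] ≠ j :: s := by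
    intro h
    have hpi : ∀ a ∈ p, a < i := by
      have := isChain_iff_pairwise.1 ((hL _ hc₁).imp hR)
      simpa using (pairwise_append.1 this).2.2
    have hj : j ∈ p ++ [i] := h ▸ mem_cons_self
    rcases mem_append.1 hj with hj | hj
    · exact lt_asymm hij (hpi j hj)
    · exact lt_irrefl i (mem_singleton.1 hj ▸ hij)
  set rest := (L.erase (p ++ [i])).erase (j :: s)
  have hperm : L.Perm ((p ++ [i]) :: (j :: s) :: rest) :=
    (perm_cons_erase hc₁).trans ((perm_cons_erase ((mem_erase_of_ne hne.symm).2 hc₂)).cons _)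
  refine ⟨(p ++ [i] ++ j :: s) :: rest, ?_, ?_, ?_⟩
  · simp [hperm.length_eq]
  · intro c hc
    rcases mem_cons.1 hc with rfl | hc
    · exact ((hL _ hc₁).imp hRS).append ((hL _ hc₂).imp hRS) (by simpa using hSij)
    · exact (hL c (hperm.symm.subset (mem_cons_of_mem _ (mem_cons_of_mem _ hc)))).imp hRS
  · simpa [append_assoc] using hperm.flatten.symm

theorem exists_chains_of_matching [Preorder α] (u : List α) (hu : ∀ a, a ∈ u)
    (M : Finset (α × α)) (hlt : ∀ e ∈ M, e.1 < e.2) (hfst : Set.InjOn Prod.fst (M : Set (α × α)))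
    (hsnd : Set.InjOn Prod.snd (M : Set (α × α))) :
    ∃ L : List (List α), L.length + M.card = u.length ∧
      (∀ c ∈ L, c.IsChain fun a b => (a, b) ∈ M) ∧ L.flatten.Perm u := by
  classical
  induction M using Finset.induction_on with
  | empty => exact ⟨u.map ([·]), by simp, by simp, by rw [← flatMap_def, flatMap_singleton']⟩
  | insert e M he ih =>
    obtain ⟨i, j⟩ := e
    have hsub : (M : Set (α × α)) ⊆ ↑(insert (i, j) M) :=
      Finset.coe_subset.2 (Finset.subset_insert _ _)
    obtain ⟨L, hlen, hL, hperm⟩ := ih (fun e h => hlt e (Finset.mem_insert_of_mem h))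
      (hfst.mono hsub) (hsnd.mono hsub)
    have hi : ∀ b, (i, b) ∉ M := fun b hb => he <|
      hfst (Finset.mem_insert_of_mem hb) (Finset.mem_insert_self _ _) rfl ▸ hb
    have hj : ∀ b, (b, j) ∉ M := fun b hb => he <|
      hsnd (Finset.mem_insert_of_mem hb) (Finset.mem_insert_self _ _) rfl ▸ hb
    obtain ⟨L', hlen', hL', hperm'⟩ :=
      exists_join_chains (S := fun a b => (a, b) ∈ insert (i, j) M)
      (fun _ _ h => hlt _ (Finset.mem_insert_of_mem h)) (fun _ _ => Finset.mem_insert_of_mem)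
      (hlt _ (Finset.mem_insert_self _ _)) (Finset.mem_insert_self _ _) hi hj hL
      (hperm.mem_iff.2 (hu i)) (hperm.mem_iff.2 (hu j))
    refine ⟨L', ?_, hL', hperm'.trans hperm⟩
    rw [Finset.card_insert_of_notMem he]
    omega

/-- Minimum chain cover equals `n` minus maximum matching size. -/
theorem stmt_5 (n : ℕ) (covers : Fin n → Fin n → Prop)
    (hlt : ∀ i j, covers i j → i < j) (t m : ℕ)
    (ht : IsLeast {t | ∃ L : List (List (Fin n)),
      L.length = t ∧ IsChainPartition n covers L} t)
    (hm : IsGreatest {m | ∃ M : Finset (Fin n × Fin n),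
      M.card = m ∧ IsMatching n covers M} m) :
    t = n - m := by
  obtain ⟨⟨L, rfl, hLchain, hLperm⟩, ht⟩ := ht
  obtain ⟨⟨M, rfl, hMcovers, hMfst, hMsnd⟩, hm⟩ := hm
  obtain ⟨M', hcovers, hfst, hsnd, hcard⟩ :=
    exists_matching_of_chains L hLchain (hLperm.nodup_iff.2 (nodup_finRange n))
  have hmatching_le : M'.card ≤ M.card :=
    hm ⟨M', rfl, hcovers, fun e he e' he' h => hfst he he' h, fun e he e' he' h => hsnd he he' h⟩
  obtain ⟨L', hlen, hchain, hperm⟩ := exists_chains_of_matching (finRange n) mem_finRange M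
    (fun e he => hlt _ _ (hMcovers e he)) (fun e he e' he' h => hMfst e he e' he' h)
    (fun e he e' he' h => hMsnd e he e' he' h)
  have hchains_le : L.length ≤ L'.length :=
    ht ⟨L', rfl, fun c hc => (hchain c hc).imp fun a b h => hMcovers _ h, hperm⟩
  rw [hLperm.length_eq, length_finRange] at hcard
  rw [length_finRange] at hlen
  omega
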